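/- Let S be a nonempty finite index set and let (ℓ_i)_{i∈S} be a family of real numbers. Then |2·artanh(∏_{i∈S} tanh(ℓ_i/2))| ≤ min_{i∈S} |ℓ_i|. That is, the magnitude of the sum-product check-node message is upper-bounded by the magnitude of the min-sum check-node message, so the min-sum update over-estimates the reliability of the sum-product update. -/

import Mathlib

/-!
Every factor `tanh (ℓ j / 2)` has modulus below `1`, so the product has modulus at most
`tanh (|ℓ i| / 2)` for each `i ∈ S`; as `artanh` is increasing on `(-1, 1)` and inverts `tanh`,
the message is then at most `|ℓ i|` in modulus.
-/

/-- The inverse hyperbolic tangent on `(-1, 1)`, defined by the standard formula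
`artanh x = (1/2) · ln ((1 + x) / (1 - x))`. -/
noncomputable def artanh (x : ℝ) : ℝ := Real.log ((1 + x) / (1 - x)) / 2

theorem Finset.abs_prod_le_abs_of_mem {ι R : Type*} [CommRing R] [LinearOrder R]
    [IsStrictOrderedRing R] {s : Finset ι} {f : ι → R} (hf : ∀ j ∈ s, |f j| ≤ 1) {i : ι}
    (hi : i ∈ s) : |∏ j ∈ s, f j| ≤ |f i| := by
  classical
  rw [Finset.abs_prod, ← Finset.prod_erase_mul _ _ hi]
  exact mul_le_of_le_one_left (abs_nonneg _) <|
    Finset.prod_le_one (fun j _ ↦ abs_nonneg _) fun j hj ↦ hf j (Finset.mem_of_mem_erase hj)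

namespace Real

theorem tanh_nonneg {x : ℝ} (hx : 0 ≤ x) : 0 ≤ tanh x := by
  rw [tanh_eq_sinh_div_cosh]
  exact div_nonneg (sinh_nonneg_iff.mpr hx) (cosh_pos x).le

theorem abs_tanh (x : ℝ) : |tanh x| = tanh |x| := by
  rcases le_total 0 x with hx | hx
  · rw [abs_of_nonneg hx, abs_of_nonneg (tanh_nonneg hx)]
  · have h := tanh_nonneg (neg_nonneg.mpr hx)
    rw [tanh_neg] at h
    rw [abs_of_nonpos hx, tanh_neg, abs_of_nonpos (neg_nonneg.mp h)]

theorem abs_artanh_le_of_abs_le_tanh {x t : ℝ} (h : |x| ≤ tanh t) : |artanh x| ≤ t := by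
  obtain ⟨hlow, hup⟩ := abs_le.mp h
  refine abs_le.mpr ⟨?_, ?_⟩
  · calc -t = artanh (tanh (-t)) := (artanh_tanh _).symm
      _ ≤ artanh x := artanh_le_artanh (neg_one_lt_tanh _)
          (hup.trans_lt (tanh_lt_one t)) (by rwa [tanh_neg])
  · calc artanh x ≤ artanh (tanh t) := artanh_le_artanh
          ((neg_lt_neg (tanh_lt_one t)).trans_le hlow) (tanh_lt_one t) hup
      _ = t := artanh_tanh t

end Real

theorem artanh_eq_real_artanh {x : ℝ} (hx : x ∈ Set.Icc (-1) 1) : artanh x = Real.artanh x := by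
  rw [Real.artanh_eq_half_log hx, artanh]
  ring

/-- The magnitude of the sum-product check-node message
`2 * artanh (∏ tanh (ℓ i / 2))` is upper-bounded by the minimum of the magnitudes
of the incoming messages, i.e., by the magnitude of the min-sum check-node
message: the min-sum update over-estimates the reliability of the sum-product
update. -/
theorem sp_checknode_abs_le_minsum {ι : Type*} (S : Finset ι) (hS : S.Nonempty)
    (ℓ : ι → ℝ) :
    |2 * artanh (∏ i ∈ S, Real.tanh (ℓ i / 2))| ≤ S.inf' hS (fun i => |ℓ i|) := by
  refine Finset.le_inf' hS _ fun i hi ↦ ?_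
  have hprod : |∏ j ∈ S, Real.tanh (ℓ j / 2)| ≤ Real.tanh (|ℓ i| / 2) :=
    calc |∏ j ∈ S, Real.tanh (ℓ j / 2)| ≤ |Real.tanh (ℓ i / 2)| :=
          Finset.abs_prod_le_abs_of_mem (fun j _ ↦ (Real.abs_tanh_lt_one _).le) hi
      _ = Real.tanh (|ℓ i| / 2) := by rw [Real.abs_tanh, abs_div, abs_two]
  have hmem : ∏ j ∈ S, Real.tanh (ℓ j / 2) ∈ Set.Icc (-1) 1 :=
    abs_le.mp (hprod.trans (Real.tanh_lt_one _).le)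
  rw [abs_mul, abs_two, artanh_eq_real_artanh hmem]
  linarith [Real.abs_artanh_le_of_abs_le_tanh hprod]
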